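/- arXiv:1902.11239 — 4 statements merged into one kernel-verified Lean document; each statement's English description precedes it below -/
import Mathlib

section
/- The O-information satisfies the assembly-path decomposition Ω(X^n) = Σ_{k=2}^{n−1} [ I(X_k; X^{k−1}) − I(X_k; X^{k−1} | X^n_{k+1}) ], where X^{k−1} = (X_1,…,X_{k−1}) and X^n_{k+1} = (X_{k+1},…,X_n). -/
open Finset

noncomputable section

variable {Ω : Type*} [Fintype Ω]

/-- Probability of the event `A ⊆ Ω` under the probability mass function `p`. -/
def probOf (p : Ω → ℝ) (A : Finset Ω) : ℝ := ∑ ω ∈ A, p ω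

/-- Shannon entropy (in bits, i.e. logarithm base 2) of the discrete random
variable `X` defined on the finite probability space with mass function `p`. -/
def shEnt {S : Type*} [Fintype S] [DecidableEq S] (p : Ω → ℝ) (X : Ω → S) : ℝ :=
  -∑ s : S, probOf p (univ.filter fun ω => X ω = s) *
      Real.logb 2 (probOf p (univ.filter fun ω => X ω = s))

/-- Mutual information `I(X;Y)`. -/
def mutInfo {S T : Type*} [Fintype S] [DecidableEq S] [Fintype T] [DecidableEq T]
    (p : Ω → ℝ) (X : Ω → S) (Y : Ω → T) : ℝ :=
  shEnt p X + shEnt p Y - shEnt p (fun ω => (X ω, Y ω))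

/-- Conditional mutual information `I(X;Y∣Z)`. -/
def condMutInfo {S T U : Type*} [Fintype S] [DecidableEq S] [Fintype T] [DecidableEq T]
    [Fintype U] [DecidableEq U] (p : Ω → ℝ) (X : Ω → S) (Y : Ω → T) (Z : Ω → U) : ℝ :=
  shEnt p (fun ω => (X ω, Z ω)) + shEnt p (fun ω => (Y ω, Z ω))
    - shEnt p (fun ω => (X ω, Y ω, Z ω)) - shEnt p Z

variable {n : ℕ} {S : Fin n → Type*} [∀ i, Fintype (S i)] [∀ i, DecidableEq (S i)]

/-- The sub-vector `X^γ` of the tuple of random variables `X`. -/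
def restrict (X : ∀ i, Ω → S i) (γ : Finset (Fin n)) : Ω → ∀ i : γ, S i.1 :=
  fun ω i => X i.1 ω

/-- Joint Shannon entropy `H(X^γ)` of the sub-vector indexed by `γ`. -/
def subEnt (p : Ω → ℝ) (X : ∀ i, Ω → S i) (γ : Finset (Fin n)) : ℝ :=
  shEnt p (restrict X γ)

/-- Total correlation `C(X^γ)`: sum of marginal entropies minus joint entropy. -/
def totCorr (p : Ω → ℝ) (X : ∀ i, Ω → S i) (γ : Finset (Fin n)) : ℝ :=
  (∑ i ∈ γ, shEnt p (X i)) - subEnt p X γ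

/-- Binding entropy `B(X^γ)`: joint entropy minus the sum of the residual
entropies `R_j = H(X_j ∣ X^γ_{-j})` (each conditional entropy being a
difference of joint entropies). -/
def bindEnt (p : Ω → ℝ) (X : ∀ i, Ω → S i) (γ : Finset (Fin n)) : ℝ :=
  subEnt p X γ - ∑ i ∈ γ, (subEnt p X γ - subEnt p X (γ.erase i))

/-- The O-information `Ω(X^γ) = C(X^γ) - B(X^γ)`. -/
def oInfo (p : Ω → ℝ) (X : ∀ i, Ω → S i) (γ : Finset (Fin n)) : ℝ :=
  totCorr p X γ - bindEnt p X γ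

/-!
Express every information quantity through joint entropies `H(X^γ)` of sub-vectors. The `k`-th
summand is then `H(X_k) + H(X^n) - H(X^n_{-k})`, the `k`-th term of `C - B`, minus the increments
`H(X^{≤k}) - H(X^{<k})` and `H(X^{≥k}) - H(X^{>k})` along two chains of sub-vectors. Summed over
all `k`, both chains telescope to `H(X^n) - H(X^∅)`, so the full sum is `Ω(X^n) + 2 H(X^∅)`, and
the two boundary summands `k = 0` and `k = n - 1` are each `H(X^∅)`.
-/

lemma shEnt_eq_neg_sum_mul_logb_probOf_fiber {T : Type*} [Fintype T] [DecidableEq T]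
    (p : Ω → ℝ) (Y : Ω → T) :
    shEnt p Y = -∑ ω, p ω * Real.logb 2 (probOf p (univ.filter fun ω' => Y ω' = Y ω)) := by
  rw [shEnt, ← sum_fiberwise univ Y]
  simp only [probOf, sum_mul]
  refine congrArg _ (sum_congr rfl fun s _ => sum_congr rfl fun ω hω => ?_)
  rw [(mem_filter.1 hω).2]

lemma shEnt_congr {T U : Type*} [Fintype T] [DecidableEq T] [Fintype U] [DecidableEq U]
    (p : Ω → ℝ) {Y : Ω → T} {Z : Ω → U} (h : ∀ ω ω', Y ω = Y ω' ↔ Z ω = Z ω') :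
    shEnt p Y = shEnt p Z := by
  simp only [shEnt_eq_neg_sum_mul_logb_probOf_fiber, h]

omit [Fintype Ω] [∀ i, Fintype (S i)] [∀ i, DecidableEq (S i)] in
lemma restrict_eq_restrict_iff (X : ∀ i, Ω → S i) (γ : Finset (Fin n)) (ω ω' : Ω) :
    restrict X γ ω = restrict X γ ω' ↔ ∀ i ∈ γ, X i ω = X i ω' :=
  ⟨fun h i hi => congrFun h ⟨i, hi⟩, fun h => funext fun i => h i.1 i.2⟩

lemma shEnt_eq_subEnt_singleton (p : Ω → ℝ) (X : ∀ i, Ω → S i) (k : Fin n) :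
    shEnt p (X k) = subEnt p X {k} :=
  shEnt_congr p fun ω ω' => by simp [restrict_eq_restrict_iff]

lemma subEnt_insert (p : Ω → ℝ) (X : ∀ i, Ω → S i) (k : Fin n) (α : Finset (Fin n)) :
    subEnt p X (insert k α) = shEnt p fun ω => (X k ω, restrict X α ω) :=
  shEnt_congr p fun ω ω' => by
    simp only [restrict_eq_restrict_iff, Prod.mk.injEq, forall_mem_insert]

lemma subEnt_union (p : Ω → ℝ) (X : ∀ i, Ω → S i) (α β : Finset (Fin n)) :
    subEnt p X (α ∪ β) = shEnt p fun ω => (restrict X α ω, restrict X β ω) :=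
  shEnt_congr p fun ω ω' => by
    simp only [restrict_eq_restrict_iff, Prod.mk.injEq, forall_mem_union]

lemma subEnt_insert_union (p : Ω → ℝ) (X : ∀ i, Ω → S i) (k : Fin n) (α β : Finset (Fin n)) :
    subEnt p X (insert k (α ∪ β)) = shEnt p fun ω => (X k ω, restrict X α ω, restrict X β ω) :=
  shEnt_congr p fun ω ω' => by
    simp only [restrict_eq_restrict_iff, Prod.mk.injEq, forall_mem_insert,
      forall_mem_union]

lemma mutInfo_restrict (p : Ω → ℝ) (X : ∀ i, Ω → S i) (k : Fin n) (α : Finset (Fin n)) :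
    mutInfo p (X k) (restrict X α)
      = subEnt p X {k} + subEnt p X α - subEnt p X (insert k α) := by
  rw [mutInfo, shEnt_eq_subEnt_singleton, subEnt_insert]
  rfl

lemma condMutInfo_restrict (p : Ω → ℝ) (X : ∀ i, Ω → S i) (k : Fin n) (α β : Finset (Fin n)) :
    condMutInfo p (X k) (restrict X α) (restrict X β)
      = subEnt p X (insert k β) + subEnt p X (α ∪ β) - subEnt p X (insert k (α ∪ β))
        - subEnt p X β := by
  rw [condMutInfo, subEnt_insert, subEnt_union, subEnt_insert_union]
  rfl

lemma oInfo_eq_sum_sub (p : Ω → ℝ) (X : ∀ i, Ω → S i) (γ : Finset (Fin n)) :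
    oInfo p X γ
      = ∑ i ∈ γ, (subEnt p X {i} + subEnt p X γ - subEnt p X (γ.erase i)) - 2 * subEnt p X γ := by
  simp only [oInfo, totCorr, bindEnt, shEnt_eq_subEnt_singleton, sum_add_distrib, sum_sub_distrib]
  ring

lemma sum_sub_Iic_Iio {M : Type*} [AddCommGroup M] (f : Finset (Fin n) → M) :
    ∑ k, (f (Iic k) - f (Iio k)) = f univ - f ∅ := by
  set g : ℕ → M := fun m => f (univ.filter fun j : Fin n => (j : ℕ) < m)
  calc ∑ k, (f (Iic k) - f (Iio k))
      = ∑ k : Fin n, (g (k + 1) - g k) := by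
        refine sum_congr rfl fun k _ => ?_
        congr 2 <;> ext j <;> simp
    _ = g n - g 0 := by rw [Fin.sum_univ_eq_sum_range (fun m => g (m + 1) - g m), sum_range_sub]
    _ = f univ - f ∅ := by simp [g]

lemma sum_sub_Ici_Ioi {M : Type*} [AddCommGroup M] (f : Finset (Fin n) → M) :
    ∑ k, (f (Ici k) - f (Ioi k)) = f univ - f ∅ := by
  set g : ℕ → M := fun m => f (univ.filter fun j : Fin n => m ≤ (j : ℕ))
  calc ∑ k, (f (Ici k) - f (Ioi k))
      = ∑ k : Fin n, (g k - g (k + 1)) := by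
        refine sum_congr rfl fun k _ => ?_
        congr 2 <;> ext j <;> simp
    _ = g 0 - g n := by rw [Fin.sum_univ_eq_sum_range (fun m => g m - g (m + 1)), sum_range_sub']
    _ = f univ - f ∅ := by
        simp only [g]
        congr 2 <;> ext j <;> simp [j.isLt]

def assemblyTerm (p : Ω → ℝ) (X : ∀ i, Ω → S i) (k : Fin n) : ℝ :=
  mutInfo p (X k) (restrict X (univ.filter fun j => j < k))
    - condMutInfo p (X k) (restrict X (univ.filter fun j => j < k))
        (restrict X (univ.filter fun j => k < j))

lemma assemblyTerm_eq (p : Ω → ℝ) (X : ∀ i, Ω → S i) (k : Fin n) :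
    assemblyTerm p X k
      = (subEnt p X {k} + subEnt p X univ - subEnt p X (univ.erase k))
        - (subEnt p X (Iic k) - subEnt p X (Iio k)) - (subEnt p X (Ici k) - subEnt p X (Ioi k)) := by
  have hsplit : Iio k ∪ Ioi k = univ.erase k := by
    ext j
    simp [lt_or_lt_iff_ne]
  rw [assemblyTerm, filter_gt_eq_Iio, filter_lt_eq_Ioi, mutInfo_restrict, condMutInfo_restrict,
    Iio_insert, Ioi_insert, hsplit, insert_erase (mem_univ k)]
  ring

lemma sum_assemblyTerm (p : Ω → ℝ) (X : ∀ i, Ω → S i) :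
    ∑ k, assemblyTerm p X k = oInfo p X univ + 2 * subEnt p X ∅ := by
  simp only [assemblyTerm_eq]
  rw [sum_sub_distrib, sum_sub_distrib, sum_sub_Iic_Iio, sum_sub_Ici_Ioi, oInfo_eq_sum_sub]
  ring

lemma assemblyTerm_of_isMin (p : Ω → ℝ) (X : ∀ i, Ω → S i) {k : Fin n} (hk : IsMin k) :
    assemblyTerm p X k = subEnt p X ∅ := by
  rw [assemblyTerm, filter_gt_eq_Iio, Iio_eq_empty.2 hk, mutInfo_restrict, condMutInfo_restrict,
    empty_union, insert_empty]
  ring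

lemma assemblyTerm_of_isMax (p : Ω → ℝ) (X : ∀ i, Ω → S i) {k : Fin n} (hk : IsMax k) :
    assemblyTerm p X k = subEnt p X ∅ := by
  rw [assemblyTerm, filter_lt_eq_Ioi, Ioi_eq_empty.2 hk, mutInfo_restrict, condMutInfo_restrict,
    union_empty, insert_empty]
  ring

/-- Indices are 0-based: the sum runs over all `k` other than `0` and `n - 1`. -/
theorem oInfo_assembly_decomposition
    (hn : 2 ≤ n) (p : Ω → ℝ)
    (X : ∀ i, Ω → S i) :
    oInfo p X Finset.univ
      = ∑ k ∈ (Finset.univ.erase (⟨0, by omega⟩ : Fin n)).erase ⟨n - 1, by omega⟩,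
          (mutInfo p (X k) (restrict X (Finset.univ.filter fun j => j < k))
            - condMutInfo p (X k)
                (restrict X (Finset.univ.filter fun j => j < k))
                (restrict X (Finset.univ.filter fun j => k < j))) := by
  have hlast : (⟨n - 1, by omega⟩ : Fin n) ∈ univ.erase ⟨0, by omega⟩ :=
    mem_erase.2 ⟨Fin.ne_of_val_ne (show n - 1 ≠ 0 by omega), mem_univ _⟩
  change _ = ∑ k ∈ _, assemblyTerm p X k
  rw [sum_erase_eq_sub hlast, sum_erase_eq_sub (mem_univ _), sum_assemblyTerm,
    assemblyTerm_of_isMin p X fun j _ => Nat.zero_le j,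
    assemblyTerm_of_isMax p X fun j _ => Nat.le_sub_one_of_lt j.isLt]
  ring
end
end

section
/- Let |𝒳| be the maximum alphabet cardinality of X_1,…,X_n and let 1 ≤ m ≤ n−1. If Ω(X^n) ≥ 0, then for every subset γ ⊆ {1,…,n} with |γ| = m one has C(X^γ) ≥ Ω(X^n) − (n−m−1) log|𝒳|. -/
/-!
Strong subadditivity `I(X;Y ∣ Z) ≥ 0` makes joint entropy submodular in the index set, so the
residual entropies of the indices in `γ` add up to at most `H(X^n) - H(X^{γᶜ})`, and those in `γᶜ`
to at most `H(X^n) - H(X^γ)`. Substituting into `Ω = C - B` gives `Ω(X^n) ≤ C(X^γ) + C(X^{γᶜ})`.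
Finally `C(X^{γᶜ}) ≤ (n - m - 1) log|𝒳|`: the joint entropy of `X^{γᶜ}` dominates the entropy of
any one of its coordinates, and each of the remaining `n - m - 1` marginal entropies is at most
`log|𝒳|`.
-/

open Finset

noncomputable section

variable {Ω : Type*} [Fintype Ω]

variable {n : ℕ} {S : Fin n → Type*} [∀ i, Fintype (S i)] [∀ i, DecidableEq (S i)]

section Law

variable {α β γ : Type*} [DecidableEq α] [DecidableEq β] [DecidableEq γ] {p : Ω → ℝ}

-- Gibbs' inequality.
theorem sum_mul_logb_nonpos (hp : ∀ ω, 0 ≤ p ω) (hp1 : ∑ ω, p ω = 1) {r : Ω → ℝ}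
    (hr : ∀ ω, 0 < p ω → 0 < r ω) (h : ∑ ω, p ω * r ω ≤ 1) :
    ∑ ω, p ω * Real.logb 2 (r ω) ≤ 0 := by
  have hlog : ∑ ω, p ω * Real.log (r ω) ≤ 0 :=
    calc ∑ ω, p ω * Real.log (r ω) ≤ ∑ ω, p ω * (r ω - 1) := by
          refine sum_le_sum fun ω _ => ?_
          rcases (hp ω).eq_or_lt with h0 | h0
          · simp [← h0]
          · exact mul_le_mul_of_nonneg_left (Real.log_le_sub_one_of_pos (hr ω h0)) h0.le
      _ ≤ 0 := by simp only [mul_sub, mul_one, sum_sub_distrib, hp1]; linarith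
  simp only [Real.logb, mul_div_assoc', ← sum_div]
  exact div_nonpos_of_nonpos_of_nonneg hlog (Real.log_nonneg one_le_two)

def law (p : Ω → ℝ) (X : Ω → α) (a : α) : ℝ :=
  probOf p (univ.filter fun ω => X ω = a)

theorem law_nonneg (hp : ∀ ω, 0 ≤ p ω) (X : Ω → α) (a : α) : 0 ≤ law p X a :=
  sum_nonneg fun ω _ => hp ω

theorem law_mono (hp : ∀ ω, 0 ≤ p ω) {X : Ω → α} {Y : Ω → β} {a : α} {b : β}
    (h : ∀ ω, Y ω = b → X ω = a) : law p Y b ≤ law p X a :=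
  sum_le_sum_of_subset_of_nonneg (fun ω hω => by simp_all) fun ω _ _ => hp ω

theorem le_law_apply (hp : ∀ ω, 0 ≤ p ω) (X : Ω → α) (ω : Ω) : p ω ≤ law p X (X ω) :=
  single_le_sum (fun ω _ => hp ω) (by simp)

theorem law_apply_pos (hp : ∀ ω, 0 ≤ p ω) (X : Ω → α) {ω : Ω} (hω : 0 < p ω) :
    0 < law p X (X ω) :=
  hω.trans_le (le_law_apply hp X ω)

def condIndepLaw (p : Ω → ℝ) (X : Ω → α) (Y : Ω → β) (Z : Ω → γ) (w : α × β × γ) : ℝ :=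
  law p (fun ω => (X ω, Z ω)) (w.1, w.2.2) * law p (fun ω => (Y ω, Z ω)) (w.2.1, w.2.2)
    / law p Z w.2.2

theorem condIndepLaw_nonneg (hp : ∀ ω, 0 ≤ p ω) (X : Ω → α) (Y : Ω → β) (Z : Ω → γ)
    (w : α × β × γ) : 0 ≤ condIndepLaw p X Y Z w :=
  div_nonneg (mul_nonneg (law_nonneg hp _ _) (law_nonneg hp _ _)) (law_nonneg hp _ _)

variable [Fintype α]

theorem sum_mul_comp_eq_sum_law (p : Ω → ℝ) (X : Ω → α) (f : α → ℝ) :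
    ∑ ω, p ω * f (X ω) = ∑ a, law p X a * f a := by
  rw [← sum_fiberwise univ X]
  refine sum_congr rfl fun a _ => ?_
  rw [law, probOf, sum_mul]
  exact sum_congr rfl fun ω hω => by rw [(mem_filter.1 hω).2]

theorem sum_law (p : Ω → ℝ) (X : Ω → α) : ∑ a, law p X a = ∑ ω, p ω := by
  simpa using (sum_mul_comp_eq_sum_law p X fun _ => 1).symm

theorem sum_law_prod_left (p : Ω → ℝ) (X : Ω → α) (Y : Ω → β) (b : β) :
    ∑ a, law p (fun ω => (X ω, Y ω)) (a, b) = law p Y b := by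
  simp only [law, probOf]
  rw [← sum_fiberwise (univ.filter fun ω => Y ω = b) X p]
  refine sum_congr rfl fun a _ => ?_
  rw [filter_filter]
  simp only [Prod.mk.injEq, and_comm]

theorem shEnt_eq_neg_sum_mul_logb_law (p : Ω → ℝ) (X : Ω → α) :
    shEnt p X = -∑ ω, p ω * Real.logb 2 (law p X (X ω)) := by
  rw [sum_mul_comp_eq_sum_law p X fun a => Real.logb 2 (law p X a)]
  rfl

-- Where `law p X a = 0` the summand is `0 * (f a / 0) = 0 ≤ f a`.
theorem sum_mul_div_law_le (X : Ω → α) {f : α → ℝ} (hf : ∀ a, 0 ≤ f a) :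
    ∑ ω, p ω * (f (X ω) / law p X (X ω)) ≤ ∑ a, f a := by
  rw [sum_mul_comp_eq_sum_law p X fun a => f a / law p X a]
  refine sum_le_sum fun a _ => ?_
  rcases eq_or_ne (law p X a) 0 with h | h
  · simp [h, hf a]
  · rw [mul_div_cancel₀ _ h]

theorem shEnt_le_logb_of_card_le (hp : ∀ ω, 0 ≤ p ω) (hp1 : ∑ ω, p ω = 1) (X : Ω → α) {N : ℕ}
    (hN : Fintype.card α ≤ N) : shEnt p X ≤ Real.logb 2 N := by
  obtain ⟨ω⟩ : Nonempty Ω := by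
    by_contra h
    simp [not_nonempty_iff.1 h] at hp1
  have hN0 : (0 : ℝ) < N := by
    have : Nonempty α := ⟨X ω⟩
    exact_mod_cast Fintype.card_pos.trans_le hN
  -- Compare the law of `X` with the uniform distribution on `N` points.
  have hgibbs := sum_mul_logb_nonpos hp hp1 (r := fun ω => (N : ℝ)⁻¹ / law p X (X ω))
    (fun ω hω => div_pos (inv_pos.2 hN0) (law_apply_pos hp X hω))
    ((sum_mul_div_law_le X fun _ => (inv_pos.2 hN0).le).trans <| by
      rw [sum_const, card_univ, nsmul_eq_mul]
      exact mul_inv_le_one_of_le₀ (by exact_mod_cast hN) hN0.le)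
  have hterm : ∀ ω, p ω * Real.logb 2 ((N : ℝ)⁻¹ / law p X (X ω))
      = -(p ω * Real.logb 2 N) - p ω * Real.logb 2 (law p X (X ω)) := by
    intro ω
    rcases (hp ω).eq_or_lt with h0 | h0
    · simp [← h0]
    · rw [Real.logb_div (inv_ne_zero hN0.ne') (law_apply_pos hp X h0).ne', Real.logb_inv]
      ring
  simp only [hterm, sum_sub_distrib, sum_neg_distrib, ← sum_mul, hp1] at hgibbs
  rw [shEnt_eq_neg_sum_mul_logb_law]
  linarith

variable [Fintype β] [Fintype γ]

theorem sum_condIndepLaw (p : Ω → ℝ) (X : Ω → α) (Y : Ω → β) (Z : Ω → γ) :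
    ∑ w, condIndepLaw p X Y Z w = ∑ ω, p ω :=
  calc ∑ w, condIndepLaw p X Y Z w
      = ∑ z, (∑ x, law p (fun ω => (X ω, Z ω)) (x, z))
          * (∑ y, law p (fun ω => (Y ω, Z ω)) (y, z)) / law p Z z := by
        simp only [condIndepLaw, Fintype.sum_prod_type, sum_mul_sum, sum_div]
        exact (sum_congr rfl fun x _ => sum_comm).trans sum_comm
    _ = ∑ ω, p ω := by simp only [sum_law_prod_left, mul_self_div_self, sum_law]

theorem condMutInfo_nonneg (hp : ∀ ω, 0 ≤ p ω) (hp1 : ∑ ω, p ω = 1)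
    (X : Ω → α) (Y : Ω → β) (Z : Ω → γ) : 0 ≤ condMutInfo p X Y Z := by
  set W := fun ω => (X ω, Y ω, Z ω)
  have hterm : ∀ ω, p ω * Real.logb 2 (condIndepLaw p X Y Z (W ω) / law p W (W ω))
      = p ω * Real.logb 2 (law p (fun ω => (X ω, Z ω)) (X ω, Z ω))
        + p ω * Real.logb 2 (law p (fun ω => (Y ω, Z ω)) (Y ω, Z ω))
        - p ω * Real.logb 2 (law p Z (Z ω)) - p ω * Real.logb 2 (law p W (W ω)) := by
    intro ω
    rcases (hp ω).eq_or_lt with h0 | h0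
    · simp [← h0]
    · have hXZ := law_apply_pos hp (fun ω => (X ω, Z ω)) h0
      have hYZ := law_apply_pos hp (fun ω => (Y ω, Z ω)) h0
      have hZ := law_apply_pos hp Z h0
      have hW := law_apply_pos hp W h0
      simp only [condIndepLaw, W] at hW ⊢
      rw [Real.logb_div (by positivity) hW.ne', Real.logb_div (by positivity) hZ.ne',
        Real.logb_mul hXZ.ne' hYZ.ne']
      ring
  have hpos : ∀ ω, 0 < p ω → 0 < condIndepLaw p X Y Z (W ω) / law p W (W ω) := fun ω hω =>
    div_pos (div_pos (mul_pos (law_apply_pos hp _ hω) (law_apply_pos hp _ hω))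
      (law_apply_pos hp Z hω)) (law_apply_pos hp W hω)
  have hgibbs := sum_mul_logb_nonpos hp hp1 hpos
    ((sum_mul_div_law_le W (condIndepLaw_nonneg hp X Y Z)).trans
      (sum_condIndepLaw p X Y Z ▸ hp1.le))
  simp only [hterm, sum_sub_distrib, sum_add_distrib, W] at hgibbs
  rw [condMutInfo, shEnt_eq_neg_sum_mul_logb_law, shEnt_eq_neg_sum_mul_logb_law,
    shEnt_eq_neg_sum_mul_logb_law, shEnt_eq_neg_sum_mul_logb_law]
  linarith

theorem shEnt_le_shEnt_of_factor (hp : ∀ ω, 0 ≤ p ω) {X : Ω → α} {Y : Ω → β}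
    (h : ∀ ω ω', Y ω = Y ω' → X ω = X ω') : shEnt p X ≤ shEnt p Y := by
  rw [shEnt_eq_neg_sum_mul_logb_law, shEnt_eq_neg_sum_mul_logb_law, neg_le_neg_iff]
  refine sum_le_sum fun ω _ => ?_
  rcases (hp ω).eq_or_lt with h0 | h0
  · simp [← h0]
  · exact mul_le_mul_of_nonneg_left (Real.logb_le_logb_of_le one_lt_two
      (law_apply_pos hp Y h0) (law_mono hp fun ω' hω' => h ω' ω hω')) h0.le

theorem shEnt_congr_s13 (hp : ∀ ω, 0 ≤ p ω) {X : Ω → α} {Y : Ω → β}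
    (h : ∀ ω ω', X ω = X ω' ↔ Y ω = Y ω') : shEnt p X = shEnt p Y :=
  (shEnt_le_shEnt_of_factor hp fun ω ω' => (h ω ω').2).antisymm
    (shEnt_le_shEnt_of_factor hp fun ω ω' => (h ω ω').1)

end Law

section Subsets

variable {p : Ω → ℝ}

theorem subEnt_mono (hp : ∀ ω, 0 ≤ p ω) (X : ∀ i, Ω → S i) {A B : Finset (Fin n)} (h : A ⊆ B) :
    subEnt p X A ≤ subEnt p X B :=
  shEnt_le_shEnt_of_factor hp fun ω ω' hB => by
    simp only [_root_.restrict, funext_iff, Subtype.forall] at hB ⊢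
    exact fun i hi => hB i (h hi)

theorem subEnt_singleton (hp : ∀ ω, 0 ≤ p ω) (X : ∀ i, Ω → S i) (i : Fin n) :
    subEnt p X {i} = shEnt p (X i) :=
  shEnt_congr_s13 hp fun ω ω' => by simp [_root_.restrict, funext_iff]

theorem subEnt_union_add_subEnt_inter_le (hp : ∀ ω, 0 ≤ p ω) (hp1 : ∑ ω, p ω = 1)
    (X : ∀ i, Ω → S i) (A B : Finset (Fin n)) :
    subEnt p X (A ∪ B) + subEnt p X (A ∩ B) ≤ subEnt p X A + subEnt p X B := by
  have hA : subEnt p X A = shEnt p fun ω => (restrict X A ω, restrict X (A ∩ B) ω) :=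
    shEnt_congr_s13 hp fun ω ω' => by
      simp only [_root_.restrict, funext_iff, Subtype.forall, Prod.ext_iff, mem_inter]
      grind
  have hB : subEnt p X B = shEnt p fun ω => (restrict X B ω, restrict X (A ∩ B) ω) :=
    shEnt_congr_s13 hp fun ω ω' => by
      simp only [_root_.restrict, funext_iff, Subtype.forall, Prod.ext_iff, mem_inter]
      grind
  have hAB : subEnt p X (A ∪ B)
      = shEnt p fun ω => (restrict X A ω, restrict X B ω, restrict X (A ∩ B) ω) :=
    shEnt_congr_s13 hp fun ω ω' => by
      simp only [_root_.restrict, funext_iff, Subtype.forall, Prod.ext_iff, mem_inter, mem_union]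
      grind
  have hssa := condMutInfo_nonneg hp hp1 (restrict X A) (restrict X B) (restrict X (A ∩ B))
  rw [condMutInfo, ← hA, ← hB, ← hAB] at hssa
  unfold subEnt at hssa ⊢
  linarith

/-- The residual entropy `R_j = H(X_j ∣ X^n_{-j})`. -/
def residEnt (p : Ω → ℝ) (X : ∀ i, Ω → S i) (j : Fin n) : ℝ :=
  subEnt p X univ - subEnt p X (univ.erase j)

theorem sum_residEnt_le (hp : ∀ ω, 0 ≤ p ω) (hp1 : ∑ ω, p ω = 1) (X : ∀ i, Ω → S i)
    (γ : Finset (Fin n)) : ∑ j ∈ γ, residEnt p X j ≤ subEnt p X univ - subEnt p X γᶜ := by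
  induction γ using Finset.induction_on with
  | empty => simp
  | @insert j γ hj ih =>
    have hunion : univ.erase j ∪ γᶜ = univ := by ext i; by_cases i = j <;> simp_all
    have hinter : univ.erase j ∩ γᶜ = (insert j γ)ᶜ := by ext i; simp
    have hsub := subEnt_union_add_subEnt_inter_le hp hp1 X (univ.erase j) γᶜ
    rw [hunion, hinter] at hsub
    rw [sum_insert hj, residEnt]
    linarith

theorem oInfo_le_totCorr_add_totCorr_compl (hp : ∀ ω, 0 ≤ p ω) (hp1 : ∑ ω, p ω = 1)
    (X : ∀ i, Ω → S i) (γ : Finset (Fin n)) :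
    oInfo p X univ ≤ totCorr p X γ + totCorr p X γᶜ := by
  have hres := sum_residEnt_le hp hp1 X γ
  have hres_compl := sum_residEnt_le hp hp1 X γᶜ
  rw [compl_compl] at hres_compl
  have hbind : bindEnt p X univ = subEnt p X univ - ∑ j, residEnt p X j := rfl
  rw [oInfo, hbind, totCorr, totCorr, totCorr, ← sum_add_sum_compl γ (residEnt p X),
    ← sum_add_sum_compl γ fun i => shEnt p (X i)]
  linarith

theorem totCorr_le_card_sub_one_mul (hp : ∀ ω, 0 ≤ p ω) (X : ∀ i, Ω → S i)
    {δ : Finset (Fin n)} (hδ : δ.Nonempty) {L : ℝ} (hL : ∀ i ∈ δ, shEnt p (X i) ≤ L) :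
    totCorr p X δ ≤ (#δ - 1 : ℝ) * L := by
  obtain ⟨i, hi⟩ := hδ
  have hjoint : shEnt p (X i) ≤ subEnt p X δ :=
    subEnt_singleton hp X i ▸ subEnt_mono hp X (singleton_subset_iff.2 hi)
  have hrest : ∑ j ∈ δ.erase i, shEnt p (X j) ≤ #(δ.erase i) • L :=
    sum_le_card_nsmul _ _ _ fun j hj => hL j (mem_of_mem_erase hj)
  rw [card_erase_of_mem hi, nsmul_eq_mul, Nat.cast_pred (card_pos.2 ⟨i, hi⟩)] at hrest
  rw [totCorr, ← add_sum_erase δ _ hi]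
  linarith

end Subsets

theorem totCorr_lower_bound_of_oInfo_nonneg_general
    (p : Ω → ℝ) (hp : ∀ ω, 0 ≤ p ω) (hp1 : ∑ ω, p ω = 1)
    (X : ∀ i, Ω → S i) (m : ℕ) (hm1 : 1 ≤ m) (hm2 : m ≤ n - 1)
    (γ : Finset (Fin n)) (hγ : γ.card = m) :
    totCorr p X γ
      ≥ oInfo p X Finset.univ
        - ((n : ℝ) - (m : ℝ) - 1) *
            Real.logb 2 ((Finset.univ.sup fun i => Fintype.card (S i) : ℕ) : ℝ) := by
  have hcard : #γᶜ = n - m := by rw [card_compl, Fintype.card_fin, hγ]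
  have hcompl : γᶜ.Nonempty := card_pos.1 (by omega)
  have hmarg : ∀ i ∈ γᶜ, shEnt p (X i)
      ≤ Real.logb 2 ((univ.sup fun i => Fintype.card (S i) : ℕ) : ℝ) :=
    fun i _ => shEnt_le_logb_of_card_le hp hp1 (X i)
      (le_sup (f := fun i => Fintype.card (S i)) (mem_univ i))
  have hcompl_bound := totCorr_le_card_sub_one_mul hp X hcompl hmarg
  rw [hcard, Nat.cast_sub (by omega)] at hcompl_bound
  linarith [oInfo_le_totCorr_add_totCorr_compl hp hp1 X γ]

/-- if `Ω(X^n) ≥ 0`, then for every subset `γ` with `|γ| = m`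
(`1 ≤ m ≤ n-1`) one has `C(X^γ) ≥ Ω(X^n) - (n-m-1)·log|𝒳|`, where `|𝒳|` is
the maximum alphabet cardinality (logarithm base 2). -/
theorem totCorr_lower_bound_of_oInfo_nonneg
    (p : Ω → ℝ) (hp : ∀ ω, 0 ≤ p ω) (hp1 : ∑ ω, p ω = 1)
    (X : ∀ i, Ω → S i) (m : ℕ) (hm1 : 1 ≤ m) (hm2 : m ≤ n - 1)
    (hΩ : 0 ≤ oInfo p X Finset.univ)
    (γ : Finset (Fin n)) (hγ : γ.card = m) :
    totCorr p X γ
      ≥ oInfo p X Finset.univ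
        - ((n : ℝ) - (m : ℝ) - 1) *
            Real.logb 2 ((Finset.univ.sup fun i => Fintype.card (S i) : ℕ) : ℝ) :=
  totCorr_lower_bound_of_oInfo_nonneg_general p hp hp1 X m hm1 hm2 γ hγ
end
end

section
/- If the joint distribution of X^n factorizes over a partition π = (α_1|…|α_m) of {1,…,n}, i.e. the random vectors X^{α_1},…,X^{α_m} are mutually independent, then Ω(X^n) = Σ_{k=1}^m Ω(X^{α_k}). -/
open Finset

noncomputable section

variable {Ω : Type*} [Fintype Ω]

variable {n : ℕ} {S : Fin n → Type*} [∀ i, Fintype (S i)] [∀ i, DecidableEq (S i)]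

/-- `π` is a partition of `{1,…,n}`: nonempty pairwise disjoint cells covering everything. -/
def IsPartition {n : ℕ} (π : Finset (Finset (Fin n))) : Prop :=
  (∀ α ∈ π, α.Nonempty) ∧ (π : Set (Finset (Fin n))).PairwiseDisjoint id ∧
    π.sup id = Finset.univ

/-- `πb` is obtained from `πa` by splitting exactly one cell `α` of `πa` into
two nonempty (disjoint) cells `β` and `β'`. -/
def ElemRefinement {n : ℕ} (πa πb : Finset (Finset (Fin n))) : Prop :=
  ∃ α β β', α ∈ πa ∧ β.Nonempty ∧ β'.Nonempty ∧ Disjoint β β' ∧ β ∪ β' = α ∧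
    πb = insert β (insert β' (πa.erase α))

/-- Partition entropy `H(π) = Σ_{α ∈ π} H(X^α)`. -/
def partEnt (p : Ω → ℝ) (X : ∀ i, Ω → S i) (π : Finset (Finset (Fin n))) : ℝ :=
  ∑ α ∈ π, subEnt p X α

/-- Partition residual entropy `R(π) = Σ_{α ∈ π} H(X^α ∣ X^{other cells})`,
each conditional entropy written as a difference of joint entropies. -/
def partRes (p : Ω → ℝ) (X : ∀ i, Ω → S i) (π : Finset (Finset (Fin n))) : ℝ :=
  ∑ α ∈ π, (subEnt p X (α ∪ (π.erase α).sup id) - subEnt p X ((π.erase α).sup id))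


/-!
Independence of the cells makes the law of every sub-vector `X^γ` factorize over the pieces
`γ ∩ α` (marginalizing out one coordinate at a time preserves the factorization, because the
coordinate lies in a single cell). Hence joint entropy is additive, `H(X^γ) = Σ_α H(X^{γ ∩ α})`,
for every `γ`. Total correlation and binding entropy are built from the single-variable
entropies, `H(X^n)` and the `H(X^{-i})`, each of which splits cell by cell, so `C` and `B`, and
with them `Ω = C - B`, are additive over the partition.
-/

section Entropy

variable {A B : Type*} [Fintype A] [DecidableEq A] [Fintype B] [DecidableEq B]

lemma sum_probOf_fiber (p : Ω → ℝ) (Y : Ω → A) :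
    ∑ a, probOf p (univ.filter fun ω => Y ω = a) = ∑ ω, p ω :=
  Finset.sum_fiberwise _ _ _

lemma shEnt_eq_sum_negMulLog (p : Ω → ℝ) (Y : Ω → A) :
    shEnt p Y = (∑ a, Real.negMulLog (probOf p (univ.filter fun ω => Y ω = a))) / Real.log 2 := by
  simp only [shEnt, Real.logb, Real.negMulLog, Finset.sum_div, ← Finset.sum_neg_distrib]
  exact Finset.sum_congr rfl fun _ _ => by ring

lemma shEnt_comp_of_injective (p : Ω → ℝ) (Y : Ω → A) {f : A → B} (hf : Function.Injective f) :
    shEnt p (fun ω => f (Y ω)) = shEnt p Y := by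
  simp only [shEnt_eq_sum_negMulLog]
  congr 1
  refine (Fintype.sum_of_injective f hf _ _ (fun b hb => ?_) fun a => ?_).symm
  · have : (univ.filter fun ω => f (Y ω) = b) = ∅ :=
      Finset.filter_false_of_mem fun ω _ hω => hb ⟨Y ω, hω⟩
    simp [this, probOf]
  · simp only [hf.eq_iff]

lemma shEnt_pair_of_indep (p : Ω → ℝ) (hp1 : ∑ ω, p ω = 1) (Y : Ω → A) (Z : Ω → B)
    (hYZ : ∀ a b, probOf p (univ.filter fun ω => Y ω = a ∧ Z ω = b)
        = probOf p (univ.filter fun ω => Y ω = a) * probOf p (univ.filter fun ω => Z ω = b)) :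
    shEnt p (fun ω => (Y ω, Z ω)) = shEnt p Y + shEnt p Z := by
  have hY := (sum_probOf_fiber p Y).trans hp1
  have hZ := (sum_probOf_fiber p Z).trans hp1
  simp only [shEnt_eq_sum_negMulLog, ← add_div, Fintype.sum_prod_type, Prod.mk.injEq, hYZ,
    Real.negMulLog_mul, Finset.sum_add_distrib, ← Finset.sum_mul, ← Finset.mul_sum, hY, hZ,
    one_mul]

end Entropy

section Marginals

variable (p : Ω → ℝ) (X : ∀ i, Ω → S i)

def margProb (γ : Finset (Fin n)) (v : ∀ i, S i) : ℝ :=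
  probOf p (univ.filter fun ω => ∀ i ∈ γ, X i ω = v i)

variable {p X}

lemma margProb_erase {γ : Finset (Fin n)} {j : Fin n} (hj : j ∈ γ) (v : ∀ i, S i) :
    margProb p X (γ.erase j) v = ∑ s : S j, margProb p X γ (Function.update v j s) := by
  unfold margProb probOf
  rw [← Finset.sum_fiberwise (univ.filter fun ω => ∀ i ∈ γ.erase j, X i ω = v i)
    (fun ω => X j ω) p]
  refine Finset.sum_congr rfl fun s _ => ?_
  rw [Finset.filter_filter]
  refine Finset.sum_congr (Finset.filter_congr fun ω _ => ?_) fun _ _ => rfl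
  rw [← Finset.insert_erase hj, Finset.forall_mem_insert, Finset.erase_insert_eq_erase,
    Finset.erase_idem, Function.update_self, and_comm]
  refine and_congr_right fun _ => forall₂_congr fun i hi => ?_
  rw [Function.update_of_ne (Finset.ne_of_mem_erase hi)]

end Marginals

section Factorization

variable {p : Ω → ℝ} {X : ∀ i, Ω → S i} {π : Finset (Finset (Fin n))}

lemma margProb_erase_eq_prod_of_eq_prod (hdisj : (π : Set (Finset (Fin n))).PairwiseDisjoint id)
    {β γ : Finset (Fin n)} {j : Fin n} (hβ : β ∈ π) (hjβ : j ∈ β) (hjγ : j ∈ γ)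
    (hγ : ∀ v, margProb p X γ v = ∏ α ∈ π, margProb p X (γ ∩ α) v) (v : ∀ i, S i) :
    margProb p X (γ.erase j) v = ∏ α ∈ π, margProb p X (γ.erase j ∩ α) v := by
  have hrest : ∀ s, ∏ α ∈ π.erase β, margProb p X (γ ∩ α) (Function.update v j s)
      = ∏ α ∈ π.erase β, margProb p X (γ.erase j ∩ α) v := by
    refine fun s => Finset.prod_congr rfl fun α hα => ?_
    have hjα : j ∉ γ ∩ α := fun h => Finset.disjoint_left.1
      (hdisj (Finset.mem_of_mem_erase hα) hβ (Finset.ne_of_mem_erase hα))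
      (Finset.mem_inter.1 h).2 hjβ
    rw [Finset.erase_inter, Finset.erase_eq_of_notMem hjα]
    unfold margProb
    congr 1
    refine Finset.filter_congr fun ω _ => forall₂_congr fun i hi => ?_
    rw [Function.update_of_ne (ne_of_mem_of_not_mem hi hjα)]
  calc margProb p X (γ.erase j) v
      = ∑ s : S j, margProb p X γ (Function.update v j s) := margProb_erase hjγ v
    _ = ∑ s : S j, margProb p X (γ ∩ β) (Function.update v j s) *
          ∏ α ∈ π.erase β, margProb p X (γ.erase j ∩ α) v := by
        simp_rw [hγ, ← Finset.mul_prod_erase π _ hβ, hrest]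
    _ = margProb p X (γ.erase j ∩ β) v * ∏ α ∈ π.erase β, margProb p X (γ.erase j ∩ α) v := by
        rw [← Finset.sum_mul, Finset.erase_inter, margProb_erase (Finset.mem_inter.2 ⟨hjγ, hjβ⟩)]
    _ = ∏ α ∈ π, margProb p X (γ.erase j ∩ α) v :=
        Finset.mul_prod_erase π (fun α => margProb p X (γ.erase j ∩ α) v) hβ

lemma margProb_eq_prod_inter (hdisj : (π : Set (Finset (Fin n))).PairwiseDisjoint id)
    (hcover : π.sup id = univ)
    (hindep : ∀ v : ∀ i, S i,
      probOf p (univ.filter fun ω => ∀ i, X i ω = v i) = ∏ α ∈ π, margProb p X α v)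
    (γ : Finset (Fin n)) (v : ∀ i, S i) :
    margProb p X γ v = ∏ α ∈ π, margProb p X (γ ∩ α) v := by
  suffices h : ∀ τ : Finset (Fin n), ∀ v,
      margProb p X (univ \ τ) v = ∏ α ∈ π, margProb p X ((univ \ τ) ∩ α) v by
    simpa using h (univ \ γ) v
  intro τ
  induction τ using Finset.induction_on with
  | empty => simpa [margProb] using hindep
  | @insert j τ hjτ ih =>
    obtain ⟨β, hβ, hjβ⟩ : ∃ β ∈ π, j ∈ β := by
      simpa using Finset.mem_sup.1 (hcover ▸ Finset.mem_univ j)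
    rw [Finset.sdiff_insert]
    exact margProb_erase_eq_prod_of_eq_prod hdisj hβ hjβ (by simpa using hjτ) ih

end Factorization

section JointEntropy

variable {p : Ω → ℝ} {X : ∀ i, Ω → S i} {π : Finset (Finset (Fin n))}

lemma subEnt_union_of_indep (hp1 : ∑ ω, p ω = 1) {γ δ : Finset (Fin n)} (hd : Disjoint γ δ)
    (hγδ : ∀ v, margProb p X (γ ∪ δ) v = margProb p X γ v * margProb p X δ v) :
    subEnt p X (γ ∪ δ) = subEnt p X γ + subEnt p X δ := by
  obtain ⟨ω₀, -⟩ := Finset.nonempty_of_sum_ne_zero (hp1 ▸ one_ne_zero)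
  let split (u : ∀ i : ↥(γ ∪ δ), S i) : (∀ i : γ, S i) × (∀ i : δ, S i) :=
    (fun i => u ⟨i, Finset.mem_union_left δ i.2⟩, fun i => u ⟨i, Finset.mem_union_right γ i.2⟩)
  have hsplit : Function.Injective split := fun u w huw => funext fun i => by
    rcases Finset.mem_union.1 i.2 with hi | hi
    · exact congrFun (congrArg Prod.fst huw) ⟨i, hi⟩
    · exact congrFun (congrArg Prod.snd huw) ⟨i, hi⟩
  rw [subEnt, ← shEnt_comp_of_injective p _ hsplit]
  refine shEnt_pair_of_indep p hp1 (restrict X γ) (restrict X δ) fun a b => ?_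
  -- off `γ ∪ δ` the values of `v` are irrelevant; `ω₀` merely supplies some
  let v (i : Fin n) : S i :=
    if hγ : i ∈ γ then a ⟨i, hγ⟩ else if hδ : i ∈ δ then b ⟨i, hδ⟩ else X i ω₀
  have hva : ∀ i (hi : i ∈ γ), v i = a ⟨i, hi⟩ := fun i hi => dif_pos hi
  have hvb : ∀ i (hi : i ∈ δ), v i = b ⟨i, hi⟩ := fun i hi =>
    (dif_neg (Finset.disjoint_right.1 hd hi)).trans (dif_pos hi)
  have hrestrict : ∀ {η : Finset (Fin n)} {c : ∀ i : η, S i}, (∀ i (hi : i ∈ η), v i = c ⟨i, hi⟩) →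
      ∀ ω, restrict X η ω = c ↔ ∀ i ∈ η, X i ω = v i := fun hc ω => by
    simp only [funext_iff, Subtype.forall, _root_.restrict]
    exact forall₂_congr fun i hi => by rw [hc i hi]
  have h := hγδ v
  simp only [margProb, Finset.forall_mem_union, ← hrestrict hva, ← hrestrict hvb] at h
  exact h

lemma subEnt_empty (hp1 : ∑ ω, p ω = 1) : subEnt p X ∅ = 0 := by
  have hall : ∀ u, (univ.filter fun ω => restrict X ∅ ω = u) = univ := fun _ =>
    Finset.filter_true_of_mem fun _ _ => Subsingleton.elim _ _
  simp [subEnt, shEnt_eq_sum_negMulLog, hall, probOf, hp1]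

lemma subEnt_eq_sum_inter (hp1 : ∑ ω, p ω = 1)
    (hdisj : (π : Set (Finset (Fin n))).PairwiseDisjoint id) (hcover : π.sup id = univ)
    (hfac : ∀ γ v, margProb p X γ v = ∏ α ∈ π, margProb p X (γ ∩ α) v) (γ : Finset (Fin n)) :
    subEnt p X γ = ∑ α ∈ π, subEnt p X (γ ∩ α) := by
  have hsub : ∀ σ ⊆ π, ∀ v, margProb p X (γ ∩ σ.sup id) v = ∏ α ∈ σ, margProb p X (γ ∩ α) v := by
    intro σ hσ v
    rw [hfac, ← Finset.prod_subset hσ fun α hα hασ => ?_]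
    · exact Finset.prod_congr rfl fun α hα => by
        rw [Finset.inter_assoc,
          Finset.inter_eq_right.2 (show α ⊆ σ.sup id from Finset.le_sup (f := id) hα)]
    · have hd : Disjoint (σ.sup id) α := Finset.disjoint_sup_left.2 fun β hβ =>
        hdisj (hσ hβ) hα (ne_of_mem_of_not_mem hβ hασ)
      rw [Finset.inter_assoc, Finset.disjoint_iff_inter_eq_empty.1 hd, Finset.inter_empty]
      simp [margProb, probOf, hp1]
  suffices h : ∀ σ ⊆ π, subEnt p X (γ ∩ σ.sup id) = ∑ α ∈ σ, subEnt p X (γ ∩ α) by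
    simpa [hcover] using h π subset_rfl
  intro σ
  induction σ using Finset.induction_on with
  | empty => simpa using subEnt_empty hp1
  | @insert β σ hβσ ih =>
    intro hσ
    have hβ : β ∈ π := hσ (Finset.mem_insert_self β σ)
    have hσ' : σ ⊆ π := (Finset.subset_insert β σ).trans hσ
    have hd : Disjoint (γ ∩ β) (γ ∩ σ.sup id) :=
      (Finset.disjoint_sup_right.2 fun α hα => hdisj hβ (hσ' hα)
        (ne_of_mem_of_not_mem hα hβσ).symm).mono Finset.inter_subset_right Finset.inter_subset_right
    have hunion : γ ∩ (insert β σ).sup id = γ ∩ β ∪ γ ∩ σ.sup id := by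
      rw [Finset.sup_insert, id, Finset.sup_eq_union, Finset.inter_union_distrib_left]
    rw [hunion, subEnt_union_of_indep hp1 hd fun v => ?_, ih hσ', Finset.sum_insert hβσ]
    rw [← hunion, hsub _ hσ, Finset.prod_insert hβσ, hsub σ hσ']

end JointEntropy

section OInformation

variable {p : Ω → ℝ} {X : ∀ i, Ω → S i} {π : Finset (Finset (Fin n))}

lemma sum_eq_sum_sum_of_partition {M : Type*} [AddCommMonoid M]
    (hdisj : (π : Set (Finset (Fin n))).PairwiseDisjoint id) (hcover : π.sup id = univ)
    (f : Fin n → M) : ∑ i, f i = ∑ α ∈ π, ∑ i ∈ α, f i := by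
  have h := Finset.sum_biUnion hdisj (f := f)
  rwa [← Finset.sup_eq_biUnion, hcover] at h

lemma totCorr_univ_eq_sum (hdisj : (π : Set (Finset (Fin n))).PairwiseDisjoint id)
    (hcover : π.sup id = univ) (hadd : ∀ γ, subEnt p X γ = ∑ α ∈ π, subEnt p X (γ ∩ α)) :
    totCorr p X univ = ∑ α ∈ π, totCorr p X α := by
  simp only [totCorr, Finset.sum_sub_distrib, ← sum_eq_sum_sum_of_partition hdisj hcover,
    hadd univ, Finset.univ_inter]

lemma bindEnt_univ_eq_sum (hadd : ∀ γ, subEnt p X γ = ∑ α ∈ π, subEnt p X (γ ∩ α)) :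
    bindEnt p X univ = ∑ α ∈ π, bindEnt p X α := by
  have hres : ∑ i, (subEnt p X univ - subEnt p X (univ.erase i))
      = ∑ α ∈ π, ∑ i ∈ α, (subEnt p X α - subEnt p X (α.erase i)) := by
    calc ∑ i, (subEnt p X univ - subEnt p X (univ.erase i))
        = ∑ i, ∑ α ∈ π, (subEnt p X α - subEnt p X (α.erase i)) := by
          simp only [hadd univ, hadd (univ.erase _), Finset.erase_inter, Finset.univ_inter,
            Finset.sum_sub_distrib]
      _ = ∑ α ∈ π, ∑ i ∈ α, (subEnt p X α - subEnt p X (α.erase i)) := by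
          rw [Finset.sum_comm]
          refine Finset.sum_congr rfl fun α _ => (Finset.sum_subset (Finset.subset_univ α)
            fun i _ hi => by rw [Finset.erase_eq_of_notMem hi, sub_self]).symm
  rw [bindEnt, hres, hadd univ]
  simp only [bindEnt, Finset.univ_inter, Finset.sum_sub_distrib]

end OInformation

theorem oInfo_additive_over_independent_partition_general
    (p : Ω → ℝ) (hp1 : ∑ ω, p ω = 1)
    (X : ∀ i, Ω → S i)
    (π : Finset (Finset (Fin n))) (hπ : IsPartition π)
    (hindep : ∀ v : ∀ i, S i,
      probOf p (Finset.univ.filter fun ω => ∀ i, X i ω = v i)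
        = ∏ α ∈ π, probOf p (Finset.univ.filter fun ω => ∀ i ∈ α, X i ω = v i)) :
    oInfo p X Finset.univ = ∑ α ∈ π, oInfo p X α := by
  obtain ⟨-, hdisj, hcover⟩ := hπ
  have hadd := subEnt_eq_sum_inter hp1 hdisj hcover (margProb_eq_prod_inter hdisj hcover hindep)
  simp only [oInfo, totCorr_univ_eq_sum hdisj hcover hadd, bindEnt_univ_eq_sum hadd,
    Finset.sum_sub_distrib]

/-- if the joint distribution of `X^n` factorizes over a
partition `π = (α_1|…|α_m)` of `{1,…,n}`, i.e. the random vectors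
`X^{α_1},…,X^{α_m}` are mutually independent, then
`Ω(X^n) = Σ_{k=1}^m Ω(X^{α_k})`. -/
theorem oInfo_additive_over_independent_partition
    (p : Ω → ℝ) (hp : ∀ ω, 0 ≤ p ω) (hp1 : ∑ ω, p ω = 1)
    (X : ∀ i, Ω → S i)
    (π : Finset (Finset (Fin n))) (hπ : IsPartition π)
    (hindep : ∀ v : ∀ i, S i,
      probOf p (Finset.univ.filter fun ω => ∀ i, X i ω = v i)
        = ∏ α ∈ π, probOf p (Finset.univ.filter fun ω => ∀ i ∈ α, X i ω = v i)) :
    oInfo p X Finset.univ = ∑ α ∈ π, oInfo p X α :=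
  oInfo_additive_over_independent_partition_general p hp1 X π hπ hindep
end
end

section
/- If n is even and the joint distribution of X^n factorizes into disjoint pairs, i.e. the pairs (X_1,X_2), (X_3,X_4), …, (X_{n−1},X_n) are mutually independent random vectors, then Ω(X^n) = 0. -/
open Finset

noncomputable section

variable {Ω : Type*} [Fintype Ω]

variable {n : ℕ} {S : Fin n → Type*} [∀ i, Fintype (S i)] [∀ i, DecidableEq (S i)]

/-! ### Auxiliary lemmas -/

lemma sum_probOf {S : Type*} [Fintype S] [DecidableEq S] (p : Ω → ℝ) (hp1 : ∑ ω, p ω = 1)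
    (F : Ω → S) : ∑ s, probOf p (univ.filter fun ω => F ω = s) = 1 := by
  unfold probOf
  rw [Finset.sum_fiberwise univ F p, hp1]

lemma probOf_filter_iff {P Q : Ω → Prop} [DecidablePred P] [DecidablePred Q] (p : Ω → ℝ)
    (h : ∀ ω, P ω ↔ Q ω) : probOf p (univ.filter P) = probOf p (univ.filter Q) := by
  congr 1; exact Finset.filter_congr fun ω _ => h ω

lemma probOf_filter_iff' {P Q : Ω → Prop} (dP : DecidablePred P) (dQ : DecidablePred Q)
    (p : Ω → ℝ) (h : ∀ ω, P ω ↔ Q ω) :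
    probOf p (@Finset.filter _ P dP univ) = probOf p (@Finset.filter _ Q dQ univ) := by
  congr 1
  exact @Finset.filter_congr _ P Q dP dQ univ (fun ω _ => h ω)

lemma probOf_partition {C : Type*} [Fintype C] [DecidableEq C] (p : Ω → ℝ)
    (F : Ω → C) (E : Ω → Prop) [DecidablePred E] :
    probOf p (univ.filter fun ω => E ω) = ∑ c, probOf p (univ.filter fun ω => F ω = c ∧ E ω) := by
  unfold probOf
  have h : ∀ c, (univ.filter fun ω => F ω = c ∧ E ω)
      = (univ.filter fun ω => E ω).filter (fun ω => F ω = c) := by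
    intro c; rw [Finset.filter_filter]; apply Finset.filter_congr; intro ω _; tauto
  simp only [h]
  rw [Finset.sum_fiberwise (univ.filter fun ω => E ω) F p]

lemma shEnt_comp_inj {S T : Type*} [Fintype S] [DecidableEq S] [Fintype T] [DecidableEq T]
    (p : Ω → ℝ) (Z : Ω → S) (f : S → T) (hf : Function.Injective f) :
    shEnt p (fun ω => f (Z ω)) = shEnt p Z := by
  unfold shEnt
  congr 1
  have key : ∀ s : S, (univ.filter fun ω => f (Z ω) = f s) = (univ.filter fun ω => Z ω = s) := by
    intro s; apply Finset.filter_congr; intro ω _; simp [hf.eq_iff]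
  calc ∑ t : T, probOf p (univ.filter fun ω => f (Z ω) = t) *
          Real.logb 2 (probOf p (univ.filter fun ω => f (Z ω) = t))
      = ∑ t ∈ univ.image f, probOf p (univ.filter fun ω => f (Z ω) = t) *
          Real.logb 2 (probOf p (univ.filter fun ω => f (Z ω) = t)) := by
        refine (Finset.sum_subset (Finset.subset_univ _) ?_).symm
        intro t _ ht
        have h : (univ.filter fun ω => f (Z ω) = t) = ∅ := by
          apply Finset.filter_false_of_mem
          intro ω _ hω
          exact ht (by simp [← hω])
        simp [h, probOf]
    _ = ∑ s : S, probOf p (univ.filter fun ω => f (Z ω) = f s) *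
          Real.logb 2 (probOf p (univ.filter fun ω => f (Z ω) = f s)) := by
        apply Finset.sum_image
        intro x _ y _ h; exact hf h
    _ = _ := by simp only [key]

lemma xlogb_mul_pointwise (a b : ℝ) :
    (a * b) * Real.logb 2 (a * b) = b * (a * Real.logb 2 a) + a * (b * Real.logb 2 b) := by
  by_cases ha : a = 0
  · simp [ha]
  by_cases hb : b = 0
  · simp [hb]
  rw [Real.logb_mul ha hb]; ring

lemma ent_two {A B : Type*} [Fintype A] [Fintype B] (q : A → ℝ) (r : B → ℝ)
    (hq : ∑ a, q a = 1) (hr : ∑ b, r b = 1) :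
    -∑ x : A × B, (q x.1 * r x.2) * Real.logb 2 (q x.1 * r x.2)
      = (-∑ a, q a * Real.logb 2 (q a)) + (-∑ b, r b * Real.logb 2 (r b)) := by
  rw [Fintype.sum_prod_type]
  simp only [xlogb_mul_pointwise]
  have h1 : ∀ a : A, ∑ b : B, (r b * (q a * Real.logb 2 (q a)) + q a * (r b * Real.logb 2 (r b)))
      = q a * Real.logb 2 (q a) + q a * (∑ b, r b * Real.logb 2 (r b)) := by
    intro a
    rw [Finset.sum_add_distrib, ← Finset.sum_mul, hr, one_mul, ← Finset.mul_sum]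
  simp only [h1]
  rw [Finset.sum_add_distrib, ← Finset.sum_mul, hq, one_mul]
  ring

lemma shEnt_pair_indep {A B : Type*} [Fintype A] [DecidableEq A] [Fintype B] [DecidableEq B]
    (p : Ω → ℝ) (hp1 : ∑ ω, p ω = 1) (U : Ω → A) (V : Ω → B)
    (h : ∀ a b, probOf p (univ.filter fun ω => U ω = a ∧ V ω = b)
        = probOf p (univ.filter fun ω => U ω = a) * probOf p (univ.filter fun ω => V ω = b)) :
    shEnt p (fun ω => (U ω, V ω)) = shEnt p U + shEnt p V := by
  unfold shEnt
  have hfil : ∀ x : A × B, (univ.filter fun ω => (U ω, V ω) = x)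
      = (univ.filter fun ω => U ω = x.1 ∧ V ω = x.2) := by
    intro x; apply Finset.filter_congr; intro ω _; simp [Prod.ext_iff]
  simp only [hfil, h]
  exact ent_two _ _ (sum_probOf p hp1 U) (sum_probOf p hp1 V)

lemma xlogb_prod_pointwise {ι : Type*} [Fintype ι] [DecidableEq ι] (g : ι → ℝ) :
    (∏ i, g i) * Real.logb 2 (∏ i, g i)
      = ∑ i, (∏ j ∈ univ.erase i, g j) * (g i * Real.logb 2 (g i)) := by
  by_cases h : ∀ i, g i ≠ 0
  · rw [Real.logb_prod univ g (fun i _ => h i), Finset.mul_sum]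
    apply Finset.sum_congr rfl
    intro i _
    rw [← Finset.mul_prod_erase univ g (Finset.mem_univ i)]
    ring
  · push_neg at h
    obtain ⟨k, hk⟩ := h
    rw [Finset.prod_eq_zero (Finset.mem_univ k) hk]
    rw [zero_mul]
    symm
    apply Finset.sum_eq_zero
    intro i _
    by_cases hik : i = k
    · subst hik; rw [hk]; simp
    · rw [Finset.prod_eq_zero (Finset.mem_erase.2 ⟨Ne.symm hik, Finset.mem_univ k⟩) hk]; simp

lemma ent_pi {ι : Type*} [Fintype ι] [DecidableEq ι] {A : ι → Type*}
    [∀ i, Fintype (A i)] [∀ i, DecidableEq (A i)]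
    (q : ∀ i, A i → ℝ) (h1 : ∀ i, ∑ a, q i a = 1) :
    -∑ w : ∀ i, A i, (∏ i, q i (w i)) * Real.logb 2 (∏ i, q i (w i))
      = ∑ i, -∑ a, q i a * Real.logb 2 (q i a) := by
  simp only [xlogb_prod_pointwise]
  rw [Finset.sum_comm]
  have main : ∀ i : ι,
      ∑ w : ∀ j, A j, (∏ j ∈ univ.erase i, q j (w j)) * (q i (w i) * Real.logb 2 (q i (w i)))
        = ∑ a, q i a * Real.logb 2 (q i a) := by
    intro i
    have key : ∀ w : ∀ j, A j,
        (∏ j ∈ univ.erase i, q j (w j)) * (q i (w i) * Real.logb 2 (q i (w i)))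
          = ∏ j, (fun j (a : A j) => if h : j = i then (q i (h ▸ a) * Real.logb 2 (q i (h ▸ a))) else q j a) j (w j) := by
      intro w
      rw [← Finset.mul_prod_erase univ _ (Finset.mem_univ i)]
      simp only [dif_pos rfl]
      rw [mul_comm]
      congr 1
      apply Finset.prod_congr rfl
      intro j hj
      simp only [dif_neg (Finset.mem_erase.1 hj).1]
    simp only [key]
    rw [← Fintype.prod_sum (fun j (a : A j) => if h : j = i then (q i (h ▸ a) * Real.logb 2 (q i (h ▸ a))) else q j a)]
    rw [← Finset.prod_erase_mul univ _ (Finset.mem_univ i)]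
    have h2 : ∀ j ∈ univ.erase i,
        (∑ a : A j, (fun (a : A j) => if h : j = i then (q i (h ▸ a) * Real.logb 2 (q i (h ▸ a))) else q j a) a) = 1 := by
      intro j hj
      simp only [dif_neg (Finset.mem_erase.1 hj).1]
      exact h1 j
    rw [Finset.prod_congr rfl h2, Finset.prod_const_one, one_mul]
    simp
  simp only [main]
  rw [neg_eq_iff_eq_neg, ← Finset.sum_neg_distrib]
  simp

lemma shEnt_tuple {ι : Type*} [Fintype ι] [DecidableEq ι] {A : ι → Type*}
    [∀ i, Fintype (A i)] [∀ i, DecidableEq (A i)]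
    (p : Ω → ℝ) (hp1 : ∑ ω, p ω = 1) (Y : ∀ k, Ω → A k)
    (h : ∀ w : ∀ k, A k, probOf p (univ.filter fun ω => ∀ k, Y k ω = w k)
        = ∏ k, probOf p (univ.filter fun ω => Y k ω = w k)) :
    shEnt p (fun ω k => Y k ω) = ∑ k, shEnt p (Y k) := by
  unfold shEnt
  have hfil : ∀ w : ∀ k, A k, (univ.filter fun ω => (fun k => Y k ω) = w)
      = (univ.filter fun ω => ∀ k, Y k ω = w k) := by
    intro w; apply Finset.filter_congr; intro ω _; simp [funext_iff]
  simp only [hfil, h]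
  exact ent_pi _ (fun k => sum_probOf p hp1 (Y k))

section Blocks

variable {ι : Type*} [Fintype ι] [DecidableEq ι] {A : ι → Type*}
    [∀ i, Fintype (A i)] [∀ i, DecidableEq (A i)]

def updAt (A : ι → Type*) (k0 : ι) (c : A k0) (r : ∀ k : {k : ι // k ≠ k0}, A k.1) : ∀ k, A k :=
  fun k => if h : k = k0 then cast (congrArg A h.symm) c else r ⟨k, h⟩

lemma updAt_self (k0 : ι) (c : A k0) (r : ∀ k : {k : ι // k ≠ k0}, A k.1) :
    updAt A k0 c r k0 = c := by
  unfold updAt; rw [dif_pos rfl]; exact eq_of_heq (cast_heq _ _)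

lemma updAt_ne (k0 : ι) (c : A k0) (r : ∀ k : {k : ι // k ≠ k0}, A k.1)
    (k : {k : ι // k ≠ k0}) : updAt A k0 c r k.1 = r k := by
  obtain ⟨k, hk⟩ := k; unfold updAt; rw [dif_neg hk]

variable (p : Ω → ℝ) (Y : ∀ k, Ω → A k) (k0 : ι)

lemma indep_block_cond (hY : ∀ w : ∀ k, A k, probOf p (univ.filter fun ω => ∀ k, Y k ω = w k)
        = ∏ k, probOf p (univ.filter fun ω => Y k ω = w k))
    (c : A k0) (r : ∀ k : {k : ι // k ≠ k0}, A k.1) :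
    probOf p (univ.filter fun ω => Y k0 ω = c ∧ ∀ k : {k : ι // k ≠ k0}, Y k.1 ω = r k)
      = probOf p (univ.filter fun ω => Y k0 ω = c)
        * ∏ k : {k : ι // k ≠ k0}, probOf p (univ.filter fun ω => Y k.1 ω = r k) := by
  have hevent : (univ.filter fun ω => Y k0 ω = c ∧ ∀ k : {k : ι // k ≠ k0}, Y k.1 ω = r k)
      = (univ.filter fun ω => ∀ k, Y k ω = updAt A k0 c r k) := by
    apply Finset.filter_congr; intro ω _
    constructor
    · rintro ⟨h0, hs⟩ k
      by_cases h : k = k0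
      · subst h; rw [updAt_self]; exact h0
      · rw [show k = (⟨k, h⟩ : {k : ι // k ≠ k0}).1 from rfl, updAt_ne]; exact hs ⟨k, h⟩
    · intro h
      refine ⟨?_, fun k => ?_⟩
      · rw [← updAt_self k0 c r]; exact h k0
      · rw [← updAt_ne k0 c r k]; exact h k.1
  rw [hevent, hY (updAt A k0 c r)]
  rw [← Finset.mul_prod_erase univ _ (Finset.mem_univ k0)]
  congr 1
  · rw [updAt_self]
  · rw [Finset.prod_subtype (univ.erase k0) (p := fun k => k ≠ k0) (by simp)
      (fun k => probOf p (univ.filter fun ω => Y k ω = updAt A k0 c r k))]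
    apply Finset.prod_congr rfl
    intro k _
    rw [updAt_ne]

lemma indep_sub (hp1 : ∑ ω, p ω = 1)
    (hY : ∀ w : ∀ k, A k, probOf p (univ.filter fun ω => ∀ k, Y k ω = w k)
        = ∏ k, probOf p (univ.filter fun ω => Y k ω = w k))
    (r : ∀ k : {k : ι // k ≠ k0}, A k.1) :
    probOf p (univ.filter fun ω => ∀ k : {k : ι // k ≠ k0}, Y k.1 ω = r k)
      = ∏ k : {k : ι // k ≠ k0}, probOf p (univ.filter fun ω => Y k.1 ω = r k) := by
  rw [probOf_partition p (Y k0) (fun ω => ∀ k : {k : ι // k ≠ k0}, Y k.1 ω = r k)]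
  simp only [indep_block_cond p Y k0 hY _ r]
  rw [← Finset.sum_mul, sum_probOf p hp1 (Y k0), one_mul]

lemma indep_map_block (hp1 : ∑ ω, p ω = 1)
    (hY : ∀ w : ∀ k, A k, probOf p (univ.filter fun ω => ∀ k, Y k ω = w k)
        = ∏ k, probOf p (univ.filter fun ω => Y k ω = w k))
    {B : Type*} [Fintype B] [DecidableEq B] (φ : A k0 → B) (b : B)
    (r : ∀ k : {k : ι // k ≠ k0}, A k.1) :
    probOf p (univ.filter fun ω => φ (Y k0 ω) = b ∧ ∀ k : {k : ι // k ≠ k0}, Y k.1 ω = r k)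
      = probOf p (univ.filter fun ω => φ (Y k0 ω) = b)
        * ∏ k : {k : ι // k ≠ k0}, probOf p (univ.filter fun ω => Y k.1 ω = r k) := by
  rw [probOf_partition p (Y k0) (fun ω => φ (Y k0 ω) = b ∧ ∀ k : {k : ι // k ≠ k0}, Y k.1 ω = r k)]
  rw [probOf_partition p (Y k0) (fun ω => φ (Y k0 ω) = b)]
  have hc : ∀ c : A k0, (univ.filter fun ω => Y k0 ω = c ∧ φ (Y k0 ω) = b
        ∧ ∀ k : {k : ι // k ≠ k0}, Y k.1 ω = r k)
      = if φ c = b then (univ.filter fun ω => Y k0 ω = c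
        ∧ ∀ k : {k : ι // k ≠ k0}, Y k.1 ω = r k) else ∅ := by
    intro c
    by_cases hφ : φ c = b
    · rw [if_pos hφ]; apply Finset.filter_congr; intro ω _
      constructor
      · rintro ⟨h1, _, h3⟩; exact ⟨h1, h3⟩
      · rintro ⟨h1, h3⟩; exact ⟨h1, by rw [h1]; exact hφ, h3⟩
    · rw [if_neg hφ, Finset.filter_eq_empty_iff]
      rintro ω _ ⟨h1, h2, _⟩
      exact hφ (by rw [← h1]; exact h2)
  have hc2 : ∀ c : A k0, (univ.filter fun ω => Y k0 ω = c ∧ φ (Y k0 ω) = b)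
      = if φ c = b then (univ.filter fun ω => Y k0 ω = c) else ∅ := by
    intro c
    by_cases hφ : φ c = b
    · rw [if_pos hφ]; apply Finset.filter_congr; intro ω _
      constructor
      · rintro ⟨h1, _⟩; exact h1
      · intro h1; exact ⟨h1, by rw [h1]; exact hφ⟩
    · rw [if_neg hφ, Finset.filter_eq_empty_iff]
      rintro ω _ ⟨h1, h2⟩
      exact hφ (by rw [← h1]; exact h2)
  simp only [hc, hc2, apply_ite (probOf p), indep_block_cond p Y k0 hY _ r]
  rw [Finset.sum_mul]
  apply Finset.sum_congr rfl
  intro c _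
  by_cases hφ : φ c = b <;> simp [hφ, probOf]

lemma shEnt_remove (hp1 : ∑ ω, p ω = 1)
    (hY : ∀ w : ∀ k, A k, probOf p (univ.filter fun ω => ∀ k, Y k ω = w k)
        = ∏ k, probOf p (univ.filter fun ω => Y k ω = w k))
    {B : Type*} [Fintype B] [DecidableEq B] (φ : A k0 → B) :
    shEnt p (fun ω => (φ (Y k0 ω), fun k : {k : ι // k ≠ k0} => Y k.1 ω))
      = shEnt p (fun ω => φ (Y k0 ω)) + ∑ k : {k : ι // k ≠ k0}, shEnt p (Y k.1) := by
  have hsub : ∀ w : ∀ k : {k : ι // k ≠ k0}, A k.1,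
      probOf p (univ.filter fun ω => ∀ k : {k : ι // k ≠ k0}, Y k.1 ω = w k)
        = ∏ k : {k : ι // k ≠ k0}, probOf p (univ.filter fun ω => Y k.1 ω = w k) :=
    indep_sub p Y k0 hp1 hY
  have hpair := shEnt_pair_indep p hp1 (fun ω => φ (Y k0 ω))
      (fun ω (k : {k : ι // k ≠ k0}) => Y k.1 ω) ?_
  · rw [hpair, shEnt_tuple p hp1 (fun (k : {k : ι // k ≠ k0}) => fun ω => Y k.1 ω) hsub]
  · intro a w
    have h1 : (univ.filter fun ω => φ (Y k0 ω) = a ∧ (fun k : {k : ι // k ≠ k0} => Y k.1 ω) = w)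
        = (univ.filter fun ω => φ (Y k0 ω) = a ∧ ∀ k : {k : ι // k ≠ k0}, Y k.1 ω = w k) := by
      apply Finset.filter_congr; intro ω _; simp [funext_iff]
    have h2 : (univ.filter fun ω => (fun k : {k : ι // k ≠ k0} => Y k.1 ω) = w)
        = (univ.filter fun ω => ∀ k : {k : ι // k ≠ k0}, Y k.1 ω = w k) := by
      apply Finset.filter_congr; intro ω _; simp [funext_iff]
    rw [h1, h2, indep_map_block p Y k0 hp1 hY φ a w, hsub w]

lemma sum_subtype_ne (k0 : ι) (f : ι → ℝ) :
    ∑ k : {k : ι // k ≠ k0}, f k.1 = (∑ k, f k) - f k0 := by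
  rw [← Finset.sum_erase_eq_sub (Finset.mem_univ k0)]
  exact (Finset.sum_subtype (univ.erase k0) (fun x => by simp) f).symm

end Blocks


/-! ### Pair-structure machinery -/

def e0 (m : ℕ) (k : Fin m) : Fin (2*m) := ⟨2*k.1, by omega⟩
def e1 (m : ℕ) (k : Fin m) : Fin (2*m) := ⟨2*k.1+1, by omega⟩

section Pairs

variable {m : ℕ} {T : Fin (2*m) → Type*}

def unpair (T : Fin (2*m) → Type*) (w : ∀ k : Fin m, T (e0 m k) × T (e1 m k))
    (i : Fin (2*m)) : T i :=
  if h : i.1 % 2 = 0 then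
    cast (congrArg T (show e0 m ⟨i.1/2, by omega⟩ = i from Fin.ext (by simp [e0]; omega)))
      (w ⟨i.1/2, by omega⟩).1
  else
    cast (congrArg T (show e1 m ⟨i.1/2, by omega⟩ = i from Fin.ext (by simp [e1]; omega)))
      (w ⟨i.1/2, by omega⟩).2

lemma cast_fst_congr (w : ∀ k : Fin m, T (e0 m k) × T (e1 m k)) {k k' : Fin m}
    (hk : k' = k) (h : e0 m k' = e0 m k) : cast (congrArg T h) (w k').1 = (w k).1 := by
  subst hk; exact eq_of_heq (cast_heq _ _)

lemma cast_snd_congr (w : ∀ k : Fin m, T (e0 m k) × T (e1 m k)) {k k' : Fin m}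
    (hk : k' = k) (h : e1 m k' = e1 m k) : cast (congrArg T h) (w k').2 = (w k).2 := by
  subst hk; exact eq_of_heq (cast_heq _ _)

lemma unpair_fst (w : ∀ k : Fin m, T (e0 m k) × T (e1 m k)) (k : Fin m) :
    unpair T w (e0 m k) = (w k).1 := by
  unfold unpair
  have h2 : (e0 m k).1 % 2 = 0 := by simp [e0]
  rw [dif_pos h2]
  apply cast_fst_congr <;> (apply Fin.ext <;> simp [e0] <;> omega)

lemma unpair_snd (w : ∀ k : Fin m, T (e0 m k) × T (e1 m k)) (k : Fin m) :
    unpair T w (e1 m k) = (w k).2 := by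
  unfold unpair
  have h2 : ¬ ((e1 m k).1 % 2 = 0) := by simp [e1]
  rw [dif_neg h2]
  apply cast_snd_congr <;> (apply Fin.ext <;> simp [e1] <;> omega)

lemma sum_pairs {m : ℕ} (f : Fin (2*m) → ℝ) :
    ∑ i, f i = ∑ k : Fin m, (f (e0 m k) + f (e1 m k)) := by
  have hbij : Function.Bijective
      (fun kr : Fin m × Fin 2 => (⟨2*kr.1.1 + kr.2.1, by omega⟩ : Fin (2*m))) := by
    constructor
    · rintro ⟨⟨a,ha⟩,⟨b,hb⟩⟩ ⟨⟨c,hc⟩,⟨d,hd⟩⟩ h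
      simp only [Fin.mk.injEq, Prod.mk.injEq] at h ⊢
      omega
    · rintro ⟨i, hi⟩
      exact ⟨(⟨i/2, by omega⟩, ⟨i%2, by omega⟩), by apply Fin.ext; simp; omega⟩
  rw [← Fintype.sum_bijective _ hbij _ f (fun x => rfl)]
  rw [Fintype.sum_prod_type]
  apply Finset.sum_congr rfl
  intro k _
  rw [Fin.sum_univ_two]
  congr 1 <;> · congr 1; apply Fin.ext; simp [e0, e1]

variable [∀ i, Fintype (T i)] [∀ i, DecidableEq (T i)]

lemma hY_of_hindep (p : Ω → ℝ) (X : ∀ i, Ω → T i)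
    (hindep : ∀ v : ∀ i, T i,
      probOf p (univ.filter fun ω => ∀ i, X i ω = v i)
        = ∏ k : Fin m, probOf p (univ.filter fun ω =>
            X (e0 m k) ω = v (e0 m k) ∧ X (e1 m k) ω = v (e1 m k))) :
    ∀ w : ∀ k : Fin m, T (e0 m k) × T (e1 m k),
      probOf p (univ.filter fun ω => ∀ k, (X (e0 m k) ω, X (e1 m k) ω) = w k)
        = ∏ k, probOf p (univ.filter fun ω => (X (e0 m k) ω, X (e1 m k) ω) = w k) := by
  intro w
  have hev : (univ.filter fun ω => ∀ k, (X (e0 m k) ω, X (e1 m k) ω) = w k)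
      = (univ.filter fun ω => ∀ i, X i ω = unpair T w i) := by
    apply Finset.filter_congr; intro ω _
    constructor
    · intro h i
      by_cases h2 : i.1 % 2 = 0
      · obtain ⟨k, rfl⟩ : ∃ k, i = e0 m k :=
          ⟨⟨i.1/2, by omega⟩, Fin.ext (by simp [e0]; omega)⟩
        rw [unpair_fst]
        exact congrArg Prod.fst (h _)
      · obtain ⟨k, rfl⟩ : ∃ k, i = e1 m k :=
          ⟨⟨i.1/2, by omega⟩, Fin.ext (by simp [e1]; omega)⟩
        rw [unpair_snd]
        exact congrArg Prod.snd (h _)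
    · intro h k
      have h1 := h (e0 m k); rw [unpair_fst] at h1
      have h2 := h (e1 m k); rw [unpair_snd] at h2
      exact Prod.ext h1 h2
  rw [hev, hindep (unpair T w)]
  apply Finset.prod_congr rfl
  intro k _
  congr 1
  apply Finset.filter_congr; intro ω _
  rw [unpair_fst, unpair_snd]
  constructor
  · rintro ⟨h1, h2⟩; exact Prod.ext h1 h2
  · intro h; exact ⟨congrArg Prod.fst h, congrArg Prod.snd h⟩

lemma subEnt_univ_eq (p : Ω → ℝ) (hp1 : ∑ ω, p ω = 1) (X : ∀ i, Ω → T i)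
    (hY : ∀ w : ∀ k : Fin m, T (e0 m k) × T (e1 m k),
      probOf p (univ.filter fun ω => ∀ k, (X (e0 m k) ω, X (e1 m k) ω) = w k)
        = ∏ k, probOf p (univ.filter fun ω => (X (e0 m k) ω, X (e1 m k) ω) = w k)) :
    shEnt p (restrict X univ)
      = ∑ k : Fin m, shEnt p (fun ω => (X (e0 m k) ω, X (e1 m k) ω)) := by
  have h1 : shEnt p (fun ω (k : Fin m) => (X (e0 m k) ω, X (e1 m k) ω))
      = shEnt p (restrict X univ) := by
    apply shEnt_comp_inj p (restrict X univ)
      (f := fun g k => (g ⟨e0 m k, Finset.mem_univ _⟩, g ⟨e1 m k, Finset.mem_univ _⟩))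
    intro g g' h
    funext x
    obtain ⟨x, hx⟩ := x
    by_cases h2 : x.1 % 2 = 0
    · obtain ⟨k, rfl⟩ : ∃ k, x = e0 m k :=
        ⟨⟨x.1/2, by omega⟩, Fin.ext (by simp [e0]; omega)⟩
      exact congrArg Prod.fst (congrFun h k)
    · obtain ⟨k, rfl⟩ : ∃ k, x = e1 m k :=
        ⟨⟨x.1/2, by omega⟩, Fin.ext (by simp [e1]; omega)⟩
      exact congrArg Prod.snd (congrFun h k)
  rw [← h1]
  refine shEnt_tuple p hp1 (fun k ω => (X (e0 m k) ω, X (e1 m k) ω)) (fun w => ?_)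
  rw [← hY w]
  exact probOf_filter_iff' _ _ p (fun ω => Iff.rfl)

lemma subEnt_erase0 (p : Ω → ℝ) (hp1 : ∑ ω, p ω = 1) (X : ∀ i, Ω → T i)
    (hY : ∀ w : ∀ k : Fin m, T (e0 m k) × T (e1 m k),
      probOf p (univ.filter fun ω => ∀ k, (X (e0 m k) ω, X (e1 m k) ω) = w k)
        = ∏ k, probOf p (univ.filter fun ω => (X (e0 m k) ω, X (e1 m k) ω) = w k))
    (k0 : Fin m) :
    shEnt p (restrict X (univ.erase (e0 m k0)))
      = shEnt p (X (e1 m k0))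
        + ((∑ k : Fin m, shEnt p (fun ω => (X (e0 m k) ω, X (e1 m k) ω)))
            - shEnt p (fun ω => (X (e0 m k0) ω, X (e1 m k0) ω))) := by
  have hmem1 : e1 m k0 ∈ univ.erase (e0 m k0) := by
    apply Finset.mem_erase.2
    refine ⟨?_, Finset.mem_univ _⟩
    simp [e0, e1, Fin.ext_iff]
  have hmem0' : ∀ k : {k : Fin m // k ≠ k0}, e0 m k.1 ∈ univ.erase (e0 m k0) := by
    rintro ⟨k, hk⟩
    apply Finset.mem_erase.2
    refine ⟨?_, Finset.mem_univ _⟩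
    simp only [e0, Ne, Fin.ext_iff]
    intro hc
    exact hk (Fin.ext (by omega))
  have hmem1' : ∀ k : {k : Fin m // k ≠ k0}, e1 m k.1 ∈ univ.erase (e0 m k0) := by
    rintro ⟨k, hk⟩
    apply Finset.mem_erase.2
    refine ⟨?_, Finset.mem_univ _⟩
    simp only [e0, e1, Ne, Fin.ext_iff]
    omega
  have h1 : shEnt p (fun ω => (X (e1 m k0) ω,
        fun k : {k : Fin m // k ≠ k0} => (X (e0 m k.1) ω, X (e1 m k.1) ω)))
      = shEnt p (restrict X (univ.erase (e0 m k0))) := by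
    apply shEnt_comp_inj p (restrict X (univ.erase (e0 m k0)))
      (f := fun g => (g ⟨e1 m k0, hmem1⟩,
        fun k : {k : Fin m // k ≠ k0} => (g ⟨e0 m k.1, hmem0' k⟩, g ⟨e1 m k.1, hmem1' k⟩)))
    intro g g' h
    funext x
    obtain ⟨x, hx⟩ := x
    have hxne := (Finset.mem_erase.1 hx).1
    by_cases h2 : x.1 % 2 = 0
    · obtain ⟨k, rfl⟩ : ∃ k, x = e0 m k :=
        ⟨⟨x.1/2, by omega⟩, Fin.ext (by simp [e0]; omega)⟩
      have hk : k ≠ k0 := by intro hc; exact hxne (by rw [hc])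
      exact congrArg Prod.fst (congrFun (congrArg Prod.snd h) ⟨k, hk⟩)
    · obtain ⟨k, rfl⟩ : ∃ k, x = e1 m k :=
        ⟨⟨x.1/2, by omega⟩, Fin.ext (by simp [e1]; omega)⟩
      by_cases hk : k = k0
      · subst hk; exact congrArg Prod.fst h
      · exact congrArg Prod.snd (congrFun (congrArg Prod.snd h) ⟨k, hk⟩)
  rw [← h1, ← sum_subtype_ne k0 (fun k => shEnt p (fun ω => (X (e0 m k) ω, X (e1 m k) ω)))]
  refine shEnt_remove p (fun k ω => (X (e0 m k) ω, X (e1 m k) ω)) k0 hp1 (fun w => ?_)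
    (Prod.snd : T (e0 m k0) × T (e1 m k0) → T (e1 m k0))
  rw [← hY w]
  exact probOf_filter_iff' _ _ p (fun ω => Iff.rfl)

lemma subEnt_erase1 (p : Ω → ℝ) (hp1 : ∑ ω, p ω = 1) (X : ∀ i, Ω → T i)
    (hY : ∀ w : ∀ k : Fin m, T (e0 m k) × T (e1 m k),
      probOf p (univ.filter fun ω => ∀ k, (X (e0 m k) ω, X (e1 m k) ω) = w k)
        = ∏ k, probOf p (univ.filter fun ω => (X (e0 m k) ω, X (e1 m k) ω) = w k))
    (k0 : Fin m) :
    shEnt p (restrict X (univ.erase (e1 m k0)))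
      = shEnt p (X (e0 m k0))
        + ((∑ k : Fin m, shEnt p (fun ω => (X (e0 m k) ω, X (e1 m k) ω)))
            - shEnt p (fun ω => (X (e0 m k0) ω, X (e1 m k0) ω))) := by
  have hmem1 : e0 m k0 ∈ univ.erase (e1 m k0) := by
    apply Finset.mem_erase.2
    refine ⟨?_, Finset.mem_univ _⟩
    simp [e0, e1, Fin.ext_iff]
  have hmem0' : ∀ k : {k : Fin m // k ≠ k0}, e0 m k.1 ∈ univ.erase (e1 m k0) := by
    rintro ⟨k, hk⟩
    apply Finset.mem_erase.2
    refine ⟨?_, Finset.mem_univ _⟩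
    simp only [e0, e1, Ne, Fin.ext_iff]
    omega
  have hmem1' : ∀ k : {k : Fin m // k ≠ k0}, e1 m k.1 ∈ univ.erase (e1 m k0) := by
    rintro ⟨k, hk⟩
    apply Finset.mem_erase.2
    refine ⟨?_, Finset.mem_univ _⟩
    simp only [e1, Ne, Fin.ext_iff]
    intro hc
    exact hk (Fin.ext (by omega))
  have h1 : shEnt p (fun ω => (X (e0 m k0) ω,
        fun k : {k : Fin m // k ≠ k0} => (X (e0 m k.1) ω, X (e1 m k.1) ω)))
      = shEnt p (restrict X (univ.erase (e1 m k0))) := by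
    apply shEnt_comp_inj p (restrict X (univ.erase (e1 m k0)))
      (f := fun g => (g ⟨e0 m k0, hmem1⟩,
        fun k : {k : Fin m // k ≠ k0} => (g ⟨e0 m k.1, hmem0' k⟩, g ⟨e1 m k.1, hmem1' k⟩)))
    intro g g' h
    funext x
    obtain ⟨x, hx⟩ := x
    have hxne := (Finset.mem_erase.1 hx).1
    by_cases h2 : x.1 % 2 = 0
    · obtain ⟨k, rfl⟩ : ∃ k, x = e0 m k :=
        ⟨⟨x.1/2, by omega⟩, Fin.ext (by simp [e0]; omega)⟩
      by_cases hk : k = k0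
      · subst hk; exact congrArg Prod.fst h
      · exact congrArg Prod.fst (congrFun (congrArg Prod.snd h) ⟨k, hk⟩)
    · obtain ⟨k, rfl⟩ : ∃ k, x = e1 m k :=
        ⟨⟨x.1/2, by omega⟩, Fin.ext (by simp [e1]; omega)⟩
      have hk : k ≠ k0 := by intro hc; exact hxne (by rw [hc])
      exact congrArg Prod.snd (congrFun (congrArg Prod.snd h) ⟨k, hk⟩)
  rw [← h1, ← sum_subtype_ne k0 (fun k => shEnt p (fun ω => (X (e0 m k) ω, X (e1 m k) ω)))]
  refine shEnt_remove p (fun k ω => (X (e0 m k) ω, X (e1 m k) ω)) k0 hp1 (fun w => ?_)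
    (Prod.fst : T (e0 m k0) × T (e1 m k0) → T (e0 m k0))
  rw [← hY w]
  exact probOf_filter_iff' _ _ p (fun ω => Iff.rfl)

end Pairs

/-- if `n = 2m` is even and the joint distribution factorizes
into disjoint pairs, i.e. the pairs `(X_1,X_2), (X_3,X_4), …, (X_{n-1},X_n)`
are mutually independent random vectors, then `Ω(X^n) = 0`. -/
theorem oInfo_eq_zero_of_pairwise_factorisation
    (p : Ω → ℝ) (hp : ∀ ω, 0 ≤ p ω) (hp1 : ∑ ω, p ω = 1)
    (m : ℕ) (hnm : n = 2 * m) (X : ∀ i, Ω → S i)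
    (hindep : ∀ v : ∀ i, S i,
      probOf p (Finset.univ.filter fun ω => ∀ i, X i ω = v i)
        = ∏ k : Fin m,
            probOf p (Finset.univ.filter fun ω =>
              X ⟨2 * k.1, by have := k.isLt; omega⟩ ω
                  = v ⟨2 * k.1, by have := k.isLt; omega⟩ ∧
              X ⟨2 * k.1 + 1, by have := k.isLt; omega⟩ ω
                  = v ⟨2 * k.1 + 1, by have := k.isLt; omega⟩)) :
    oInfo p X Finset.univ = 0 := by
  subst hnm
  have hY := hY_of_hindep p X (fun v => hindep v)
  have Hfull : subEnt p X univ
      = ∑ k : Fin m, shEnt p (fun ω => (X (e0 m k) ω, X (e1 m k) ω)) :=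
    subEnt_univ_eq p hp1 X hY
  have H0 : ∀ k0 : Fin m, subEnt p X (univ.erase (e0 m k0))
      = shEnt p (X (e1 m k0))
        + ((∑ k : Fin m, shEnt p (fun ω => (X (e0 m k) ω, X (e1 m k) ω)))
            - shEnt p (fun ω => (X (e0 m k0) ω, X (e1 m k0) ω))) :=
    fun k0 => subEnt_erase0 p hp1 X hY k0
  have H1 : ∀ k0 : Fin m, subEnt p X (univ.erase (e1 m k0))
      = shEnt p (X (e0 m k0))
        + ((∑ k : Fin m, shEnt p (fun ω => (X (e0 m k) ω, X (e1 m k) ω)))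
            - shEnt p (fun ω => (X (e0 m k0) ω, X (e1 m k0) ω))) :=
    fun k0 => subEnt_erase1 p hp1 X hY k0
  unfold oInfo totCorr bindEnt
  rw [Finset.sum_sub_distrib]
  rw [sum_pairs (fun i => subEnt p X (univ.erase i))]
  have hE : ∑ k : Fin m, (subEnt p X (univ.erase (e0 m k)) + subEnt p X (univ.erase (e1 m k)))
      = ∑ k : Fin m, ((shEnt p (X (e0 m k)) + shEnt p (X (e1 m k)))
          + (2 * (∑ j : Fin m, shEnt p (fun ω => (X (e0 m j) ω, X (e1 m j) ω)))
            - 2 * shEnt p (fun ω => (X (e0 m k) ω, X (e1 m k) ω)))) :=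
    Finset.sum_congr rfl (fun k _ => by rw [H0 k, H1 k]; ring)
  rw [hE, Finset.sum_add_distrib, ← sum_pairs (fun i => shEnt p (X i)),
    Finset.sum_sub_distrib, ← Finset.mul_sum, Hfull]
  simp only [Finset.sum_const, Finset.card_univ, Fintype.card_fin, nsmul_eq_mul]
  push_cast
  ring_nf
  rw [← Finset.sum_mul]
  ring
end
end
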